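/- Let f : I → ℝ be continuous and y ∈ I an M₁-point of f. If the lower left Dini derivative D₋f(y) is negative, then the upper right Dini derivative satisfies D⁺f(y) ≤ 1/|D₋f(y)|. -/

import Mathlib

open Filter

/-- The natural parametrization of the graph of `f`, as a map into the Euclidean plane. -/
noncomputable def graphMap (f : ℝ → ℝ) (t : ℝ) : EuclideanSpace ℝ (Fin 2) := WithLp.toLp 2 ![t, f t]

/-- Upper right Dini derivative of `f` at `y`, relative to `I`, with values in `EReal`. -/
noncomputable def diniSupR (f : ℝ → ℝ) (I : Set ℝ) (y : ℝ) : EReal :=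
  limsup (fun t => (((f t - f y) / (t - y) : ℝ) : EReal)) (nhdsWithin y (Set.Ioi y ∩ I))

/-- Lower left Dini derivative of `f` at `y`, relative to `I`, with values in `EReal`. -/
noncomputable def diniInfL (f : ℝ → ℝ) (I : Set ℝ) (y : ℝ) : EReal :=
  liminf (fun t => (((f t - f y) / (t - y) : ℝ) : EReal)) (nhdsWithin y (Set.Iio y ∩ I))

/-- `y` is an `M₁`-point of `f` (relative to `I`). -/
def IsM1Point (f : ℝ → ℝ) (I : Set ℝ) (y : ℝ) : Prop :=
  ∃ ε > 0, ∀ x ∈ Set.Ioo (y - ε) y ∩ I, ∀ z ∈ Set.Ioo y (y + ε) ∩ I,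
    ‖graphMap f x - graphMap f y‖ ≤ ‖graphMap f x - graphMap f z‖

open Topology Set

/-!
Put `a = y - x`, `u = f x - f y > 0` for a point `x` left of `y`, and `b = z - y`, `v = f z - f y`
for a point `z` right of `y`. The `M₁` inequality `a² + u² ≤ (a + b)² + (u - v)²` says
`v (2u - v) ≤ b (2a + b)`, so the right slope `v / b` is at most `(2a + b) / (2u - v)`, which tends
to `a / u` as `z → y⁺` by continuity. Hence `D⁺f(y) ≤ a / u`, the reciprocal of minus the left
slope at `x`; as `D₋f(y) ≤ r`, there are such `x` with slope below any `r' ∈ (r, 0)`.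
-/

lemma norm_graphMap_sub_sq (f : ℝ → ℝ) (p q : ℝ) :
    ‖graphMap f p - graphMap f q‖ ^ 2 = (p - q) ^ 2 + (f p - f q) ^ 2 := by
  have h : graphMap f p - graphMap f q = WithLp.toLp 2 ![p - q, f p - f q] := by
    ext i
    fin_cases i <;> simp [graphMap]
  rw [h, EuclideanSpace.norm_eq, Real.sq_sqrt (by positivity)]
  simp [Fin.sum_univ_two, sq_abs]

lemma div_le_div_of_sq_add_sq_le {a u b v : ℝ} (hb : 0 < b) (hv : v < 2 * u)
    (h : a ^ 2 + u ^ 2 ≤ (a + b) ^ 2 + (u - v) ^ 2) :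
    v / b ≤ (2 * a + b) / (2 * u - v) := by
  rw [div_le_div_iff₀ hb (by linarith)]
  nlinarith

lemma IsM1Point.eventually_norm_sub_le {f : ℝ → ℝ} {I : Set ℝ} {y : ℝ} (hM : IsM1Point f I y) :
    ∀ᶠ x in 𝓝[Iio y ∩ I] y, x < y ∧ ∀ᶠ z in 𝓝[Ioi y ∩ I] y,
      ‖graphMap f x - graphMap f y‖ ≤ ‖graphMap f x - graphMap f z‖ := by
  obtain ⟨ε, hε, hM⟩ := hM
  have hball : ∀ s : Set ℝ, ∀ᶠ t in 𝓝[s] y, t ∈ Ioo (y - ε) (y + ε) := fun s =>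
    eventually_nhdsWithin_of_eventually_nhds (Ioo_mem_nhds (by linarith) (by linarith))
  filter_upwards [hball _, self_mem_nhdsWithin] with x hx hxI
  refine ⟨hxI.1, ?_⟩
  filter_upwards [hball _, self_mem_nhdsWithin] with z hz hzI
  exact hM x ⟨⟨hx.1, hxI.1⟩, hxI.2⟩ z ⟨⟨hzI.1, hz.2⟩, hzI.2⟩

theorem diniSupR_le_of_norm_sub_le {f : ℝ → ℝ} {I : Set ℝ} {x y : ℝ}
    (hfy : ContinuousWithinAt f I y) (hu : f y < f x)
    (hdist : ∀ᶠ z in 𝓝[Ioi y ∩ I] y,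
      ‖graphMap f x - graphMap f y‖ ≤ ‖graphMap f x - graphMap f z‖) :
    diniSupR f I y ≤ (((y - x) / (f x - f y) : ℝ) : EReal) := by
  set a := y - x
  set u := f x - f y
  have hv : Tendsto (fun z => f z - f y) (𝓝[Ioi y ∩ I] y) (𝓝 0) := by
    simpa using (hfy.mono inter_subset_right).tendsto.sub_const (f y)
  have hb : Tendsto (fun z => z - y) (𝓝[Ioi y ∩ I] y) (𝓝 0) := by
    simpa using (continuousWithinAt_id (s := Ioi y ∩ I) (x := y)).tendsto.sub_const y
  have hbound : Tendsto (fun z => (2 * a + (z - y)) / (2 * u - (f z - f y)))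
      (𝓝[Ioi y ∩ I] y) (𝓝 (a / u)) := by
    have := (hb.const_add (2 * a)).div (hv.const_sub (2 * u)) (by linarith : 0 < 2 * u - 0).ne'
    rwa [add_zero, sub_zero, mul_div_mul_left _ _ two_ne_zero] at this
  have hslope : ∀ᶠ z in 𝓝[Ioi y ∩ I] y,
      (f z - f y) / (z - y) ≤ (2 * a + (z - y)) / (2 * u - (f z - f y)) := by
    filter_upwards [hdist, self_mem_nhdsWithin, hv.eventually (gt_mem_nhds (by linarith : 0 < 2 * u))]
      with z hz hzI hvu
    apply div_le_div_of_sq_add_sq_le (sub_pos.2 hzI.1) (by linarith)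
    have := pow_le_pow_left₀ (norm_nonneg _) hz 2
    rw [norm_graphMap_sub_sq, norm_graphMap_sub_sq] at this
    calc a ^ 2 + u ^ 2 = (x - y) ^ 2 + (f x - f y) ^ 2 := by ring
      _ ≤ (x - z) ^ 2 + (f x - f z) ^ 2 := this
      _ = (a + (z - y)) ^ 2 + (u - (f z - f y)) ^ 2 := by ring
  rcases (𝓝[Ioi y ∩ I] y).eq_or_neBot with hbot | hne
  · simp [diniSupR, hbot]
  · calc diniSupR f I y
        ≤ limsup (fun z => (((2 * a + (z - y)) / (2 * u - (f z - f y)) : ℝ) : EReal))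
            (𝓝[Ioi y ∩ I] y) :=
          limsup_le_limsup (hslope.mono fun z hz => EReal.coe_le_coe_iff.2 hz)
      _ = _ := (continuous_coe_real_ereal.tendsto _ |>.comp hbound).limsup_eq

theorem stmt_14_general (I : Set ℝ) (f : ℝ → ℝ) (hf : ContinuousOn f I)
    (y : ℝ) (hy : y ∈ I) (hM : IsM1Point f I y) :
    ∀ r : ℝ, r < 0 → diniInfL f I y ≤ (r : EReal) →
      diniSupR f I y ≤ ((1 / (-r) : ℝ) : EReal) := by
  intro r hr hle
  refine EReal.le_of_forall_lt_iff_le.1 fun c hc => ?_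
  have hc' : 1 / -r < c := by exact_mod_cast hc
  have hcpos : 0 < c := (one_div_pos.2 (neg_pos.2 hr)).trans hc'
  have hrc : r < -c⁻¹ := by
    rw [one_div_lt (neg_pos.2 hr) hcpos, one_div] at hc'
    linarith
  have hfreq : ∃ᶠ x in 𝓝[Iio y ∩ I] y, (f x - f y) / (x - y) < -c⁻¹ := by
    have := frequently_lt_of_liminf_lt (h := hle.trans_lt (EReal.coe_lt_coe_iff.2 hrc))
    exact this.mono fun x hx => EReal.coe_lt_coe_iff.1 hx
  obtain ⟨x, hslope, hxy, hdist⟩ := (hfreq.and_eventually hM.eventually_norm_sub_le).exists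
  have hslope' : c⁻¹ < (f x - f y) / (y - x) := by
    rw [← neg_sub y x, div_neg] at hslope
    linarith
  have hu : 0 < f x - f y :=
    (div_pos_iff_of_pos_right (sub_pos.2 hxy)).1 ((inv_pos.2 hcpos).trans hslope')
  calc diniSupR f I y ≤ (((y - x) / (f x - f y) : ℝ) : EReal) :=
        diniSupR_le_of_norm_sub_le (hf.continuousWithinAt hy) (sub_pos.1 hu) hdist
    _ ≤ c := by
      rw [EReal.coe_le_coe_iff, ← inv_div]
      exact ((inv_lt_comm₀ (div_pos hu (sub_pos.2 hxy)) hcpos).2 hslope').le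

/-- If `y ∈ I` is an `M₁`-point of the continuous function `f` and the lower left Dini
derivative `D₋f(y)` is negative, then `D⁺f(y) ≤ 1/|D₋f(y)|`.  (The bound is expressed
equivalently as: for every real `r < 0` with `D₋f(y) ≤ r` one has `D⁺f(y) ≤ 1/(−r)`,
which also covers the case `D₋f(y) = −∞`.) -/
theorem stmt_14 (I : Set ℝ) (hI : I.OrdConnected) (f : ℝ → ℝ) (hf : ContinuousOn f I)
    (y : ℝ) (hy : y ∈ I) (hM : IsM1Point f I y) (hneg : diniInfL f I y < 0) :
    ∀ r : ℝ, r < 0 → diniInfL f I y ≤ (r : EReal) →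
      diniSupR f I y ≤ ((1 / (-r) : ℝ) : EReal) :=
  stmt_14_general I f hf y hy hM
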